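/- arXiv:1704.02802 — 3 statements merged into one kernel-verified Lean document; each statement's English description precedes it below -/
import Mathlib

section
/- Let α be an infinite cardinal and I an ideal on an arc-connected topological space X, and let a ∈ X. Then the set {[f] : f is an α-I-loop based at a} of path-homotopy classes of α-I-loops is a subgroup of the fundamental group π₁(X, a), provided X has at least two points and there exists a continuous injective path from a to some other point. -/
/-- `I` is an ideal on `X`. -/
def IsIdealOn {X : Type*} (I : Set (Set X)) : Prop :=
  I.Nonempty ∧ (∀ A ∈ I, ∀ B ∈ I, A ∪ B ∈ I) ∧ (∀ A ∈ I, ∀ B, B ⊆ A → B ∈ I)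

/-- The homotopy class of a loop, as an element of the fundamental group. -/
noncomputable def loopClass {X : Type*} [TopologicalSpace X] {a : X} (f : Path a a) :
    FundamentalGroup X a :=
  @FundamentalGroup.fromPath X _ a ⟦f⟧

/-!
The α-I-loops are closed under concatenation and reversal: a fibre of `f.trans g` is split
between a fibre of `f` and one of `g`, so its cardinality is below the infinite cardinal `α`
outside the union of the two exceptional sets, and reversal is a bijective reparametrisation.
The only subtle point is the identity: the constant loop has a fibre of size continuum, so
instead `1` is represented by `γ.trans γ.symm` for an arc `γ` leaving `a`, whose fibres have
at most two points.
-/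

open Cardinal

theorem IsIdealOn.empty_mem {X : Type*} {I : Set (Set X)} (hI : IsIdealOn I) : ∅ ∈ I :=
  let ⟨A, hA⟩ := hI.1
  hI.2.2 A hA ∅ (Set.empty_subset A)

namespace Path

variable {X : Type*} [TopologicalSpace X] {a b c : X}

theorem mk_preimage_trans_le (f : Path a b) (g : Path b c) (x : X) :
    #(f.trans g ⁻¹' {x}) ≤ #(f ⁻¹' {x}) + #(g ⁻¹' {x}) := by
  rw [add_def]
  refine mk_le_of_injective (f := fun t =>
    if h : (t.1 : ℝ) ≤ 1 / 2 then
      .inl ⟨⟨2 * t.1, (unitInterval.mul_pos_mem_iff two_pos).2 ⟨t.1.2.1, h⟩⟩, by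
        simpa only [Set.mem_preimage, Path.trans_apply, dif_pos h] using t.2⟩
    else
      .inr ⟨⟨2 * t.1 - 1, unitInterval.two_mul_sub_one_mem_iff.2 ⟨(not_le.1 h).le, t.1.2.2⟩⟩, by
        simpa only [Set.mem_preimage, Path.trans_apply, dif_neg h] using t.2⟩) ?_
  rintro ⟨s, hs⟩ ⟨t, ht⟩ h
  by_cases hs' : (s : ℝ) ≤ 1 / 2 <;> by_cases ht' : (t : ℝ) ≤ 1 / 2 <;>
    simp only [hs', ht', dite_true, dite_false, Sum.inl.injEq, Sum.inr.injEq, Subtype.mk.injEq,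
      reduceCtorEq] at h <;> ext <;> linarith

theorem mk_preimage_symm (f : Path a b) (x : X) : #(f.symm ⁻¹' {x}) = #(f ⁻¹' {x}) :=
  mk_preimage_equiv unitInterval.symmHomeomorph.toEquiv (f ⁻¹' {x})

theorem mk_preimage_le_one_of_injective {f : Path a b} (hf : Function.Injective f) (x : X) :
    #(f ⁻¹' {x}) ≤ 1 :=
  mk_le_one_iff_set_subsingleton.2 (Set.subsingleton_singleton.preimage hf)

/-- The paper's α-`I`-paths. -/
def IsIdealPath (α : Cardinal) (I : Set (Set X)) (f : Path a b) : Prop :=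
  ∃ A ∈ I, ∀ x ∉ A, #(f ⁻¹' {x}) < α

variable {α : Cardinal} {I : Set (Set X)}

theorem IsIdealPath.trans (hα : ℵ₀ ≤ α) (hI : IsIdealOn I) {f : Path a b} {g : Path b c}
    (hf : f.IsIdealPath α I) (hg : g.IsIdealPath α I) : (f.trans g).IsIdealPath α I := by
  obtain ⟨A, hA, hfA⟩ := hf
  obtain ⟨B, hB, hgB⟩ := hg
  refine ⟨A ∪ B, hI.2.1 A hA B hB, fun x hx => ?_⟩
  rw [Set.mem_union, not_or] at hx
  exact (mk_preimage_trans_le f g x).trans_lt (add_lt_of_lt hα (hfA x hx.1) (hgB x hx.2))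

theorem IsIdealPath.symm {f : Path a b} (hf : f.IsIdealPath α I) : f.symm.IsIdealPath α I := by
  obtain ⟨A, hA, hfA⟩ := hf
  exact ⟨A, hA, fun x hx => (mk_preimage_symm f x).trans_lt (hfA x hx)⟩

theorem isIdealPath_trans_symm_of_injective (hα : ℵ₀ ≤ α) (hI : IsIdealOn I) {γ : Path a b}
    (hγ : Function.Injective γ) : (γ.trans γ.symm).IsIdealPath α I := by
  refine ⟨∅, hI.empty_mem, fun x _ => ?_⟩
  calc #(γ.trans γ.symm ⁻¹' {x}) ≤ #(γ ⁻¹' {x}) + #(γ.symm ⁻¹' {x}) :=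
        mk_preimage_trans_le γ γ.symm x
    _ ≤ 1 + 1 := by
        rw [mk_preimage_symm]
        exact add_le_add (mk_preimage_le_one_of_injective hγ x)
          (mk_preimage_le_one_of_injective hγ x)
    _ < ℵ₀ := by norm_num
    _ ≤ α := hα

end Path

section loopClass

variable {X : Type*} [TopologicalSpace X] {a : X}

theorem loopClass_trans (f g : Path a a) : loopClass (f.trans g) = loopClass g * loopClass f :=
  rfl

theorem loopClass_trans_symm {b : X} (γ : Path a b) : loopClass (γ.trans γ.symm) = 1 :=
  Quotient.sound ⟨(Path.Homotopy.reflTransSymm γ).symm⟩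

theorem loopClass_symm (f : Path a a) : loopClass f.symm = (loopClass f)⁻¹ := by
  rw [eq_inv_iff_mul_eq_one, ← loopClass_trans, loopClass_trans_symm]

end loopClass

noncomputable def idealLoopSubgroup {X : Type*} [TopologicalSpace X] {α : Cardinal}
    (hα : ℵ₀ ≤ α) {I : Set (Set X)} (hI : IsIdealOn I) {a b : X} {γ : Path a b}
    (hγ : Function.Injective γ) : Subgroup (FundamentalGroup X a) where
  carrier := {p | ∃ f : Path a a, f.IsIdealPath α I ∧ loopClass f = p}
  mul_mem' := by
    rintro _ _ ⟨f, hf, rfl⟩ ⟨g, hg, rfl⟩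
    exact ⟨g.trans f, hg.trans hα hI hf, loopClass_trans g f⟩
  one_mem' :=
    ⟨γ.trans γ.symm, Path.isIdealPath_trans_symm_of_injective hα hI hγ, loopClass_trans_symm γ⟩
  inv_mem' := by
    rintro _ ⟨f, hf, rfl⟩
    exact ⟨f.symm, hf.symm, loopClass_symm f⟩

/-- For an infinite cardinal `α` and an ideal `I` on an arc-connected space `X` with at least
two points, the set of homotopy classes of α-I-loops based at `a` is a subgroup of `π₁(X, a)`. -/
theorem stmt2 {X : Type*} [TopologicalSpace X] (α : Cardinal) (hα : Cardinal.aleph0 ≤ α)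
    (I : Set (Set X)) (hI : IsIdealOn I) (a : X)
    (harc : ∀ p q : X, p ≠ q → ∃ γ : Path p q, Function.Injective γ)
    (htwo : ∃ b : X, b ≠ a) :
    ∃ S : Subgroup (FundamentalGroup X a),
      (S : Set (FundamentalGroup X a)) =
        {p | ∃ f : Path a a,
          (∃ A ∈ I, ∀ x ∉ A, Cardinal.mk ((⇑f) ⁻¹' {x}) < α) ∧ loopClass f = p} := by
  obtain ⟨b, hb⟩ := htwo
  obtain ⟨γ, hγ⟩ := harc a b hb.symm
  exact ⟨idealLoopSubgroup hα hI hγ, rfl⟩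
end

section
/- Let X and Y be closed path-connected subspaces of a space Z with X ∩ Y = {t}, and let g, h : [0,1] → X ∪ Y be loops based at t with g([0,1]) ⊆ X and h([0,1]) ⊆ Y. Then g and h are path-homotopic in X ∪ Y if and only if both are null-homotopic in X ∪ Y. -/
private lemma stmt9_aux {A : Type*} [TopologicalSpace A] {a b : A} (e : a = b)
    (p q : Path a a) (p' q' : Path b b) (hp : ∀ s, p s = p' s) (hq : ∀ s, q s = q' s)
    (hpq : p.Homotopic q) : p'.Homotopic q' := by
  subst e
  have hp' : p = p' := by ext s; exact hp s
  have hq' : q = q' := by ext s; exact hq s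
  rwa [hp', hq'] at hpq

/-- Retraction of `U = A ∪ B` fixing `A` and collapsing `B` to `t`, where `A ∩ B = {t}`. -/
private lemma stmt9_retract {Z : Type*} [TopologicalSpace Z] {U A B : Set Z}
    (hA : IsClosed A) (hB : IsClosed B) {t : Z} (hAB : A ∩ B = {t})
    (hU : U = A ∪ B) (ht : t ∈ U) :
    ∃ r : C(↥U, ↥U), (∀ z : ↥U, (z : Z) ∈ A → r z = z) ∧
      (∀ z : ↥U, (z : Z) ∈ B → r z = ⟨t, ht⟩) := by
  classical
  set s : Set ↥U := Subtype.val ⁻¹' A with hs_def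
  have hs : IsClosed s := hA.preimage continuous_subtype_val
  have hcompl : sᶜ ⊆ Subtype.val ⁻¹' B := by
    intro z hz
    have hz2 : (z : Z) ∈ A ∪ B := by rw [← hU]; exact z.2
    rcases hz2 with hzA | hzB
    · exact absurd hzA hz
    · exact hzB
  have hfrontier : ∀ a ∈ frontier s, (id a : ↥U) = (⟨t, ht⟩ : ↥U) := by
    intro a ha
    have haA : (a : Z) ∈ A := hs.frontier_subset ha
    have haB : (a : Z) ∈ B := by
      have h1 : a ∈ closure sᶜ := by
        rw [frontier_eq_closure_inter_closure] at ha
        exact ha.2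
      have h2 : closure sᶜ ⊆ Subtype.val ⁻¹' B :=
        closure_minimal hcompl (hB.preimage continuous_subtype_val)
      exact h2 h1
    have : (a : Z) ∈ ({t} : Set Z) := hAB ▸ ⟨haA, haB⟩
    exact Subtype.ext this
  refine ⟨⟨s.piecewise id (fun _ => ⟨t, ht⟩),
      Continuous.piecewise hfrontier continuous_id continuous_const⟩, ?_, ?_⟩
  · intro z hz
    show s.piecewise id (fun _ => ⟨t, ht⟩) z = z
    exact Set.piecewise_eq_of_mem s _ _ (show z ∈ s from hz)
  · intro z hz
    by_cases hzA : (z : Z) ∈ A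
    · have : (z : Z) ∈ ({t} : Set Z) := hAB ▸ ⟨hzA, hz⟩
      have hz' : z = (⟨t, ht⟩ : ↥U) := Subtype.ext this
      simp only [ContinuousMap.coe_mk]
      rw [Set.piecewise_eq_of_mem _ _ _ (show z ∈ s from hzA)]
      exact hz'
    · show s.piecewise id (fun _ => ⟨t, ht⟩) z = ⟨t, ht⟩
      exact Set.piecewise_eq_of_notMem s _ _ (show z ∉ s from hzA)

/-- Let `X, Y` be closed path-connected subspaces of `Z` with `X ∩ Y = {t}`. If `g` is a loop
at `t` with values in `X` and `h` is a loop at `t` with values in `Y`, then `g` and `h` are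
path-homotopic in `X ∪ Y` iff both are null-homotopic in `X ∪ Y`. -/
theorem stmt9 {Z : Type*} [TopologicalSpace Z] (X Y : Set Z)
    (hX : IsClosed X) (hY : IsClosed Y)
    (hXc : IsPathConnected X) (hYc : IsPathConnected Y)
    (t : Z) (hXY : X ∩ Y = {t}) (ht : t ∈ X ∪ Y)
    (g h : Path (⟨t, ht⟩ : ↥(X ∪ Y)) ⟨t, ht⟩)
    (hgr : ∀ s, (g s : Z) ∈ X) (hhr : ∀ s, (h s : Z) ∈ Y) :
    g.Homotopic h ↔
      (g.Homotopic (Path.refl (⟨t, ht⟩ : ↥(X ∪ Y))) ∧ h.Homotopic (Path.refl (⟨t, ht⟩ : ↥(X ∪ Y)))) := by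
  have htXY : t ∈ X ∩ Y := by rw [hXY]; exact rfl
  constructor
  · intro hgh
    constructor
    · -- collapse Y to t
      obtain ⟨r, hr1, hr2⟩ := stmt9_retract hX hY hXY rfl ht
      have e : r ⟨t, ht⟩ = ⟨t, ht⟩ := hr1 _ htXY.1
      refine stmt9_aux e (g.map r.continuous) (h.map r.continuous) g (Path.refl _)
        (fun s => ?_) (fun s => ?_) (hgh.map r)
      · exact hr1 _ (hgr s)
      · exact hr2 _ (hhr s)
    · -- collapse X to t
      obtain ⟨r, hr1, hr2⟩ := stmt9_retract hY hX
        (by rw [Set.inter_comm]; exact hXY) (Set.union_comm X Y) ht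
      have e : r ⟨t, ht⟩ = ⟨t, ht⟩ := hr1 _ htXY.2
      refine stmt9_aux e (h.map r.continuous) (g.map r.continuous) h (Path.refl _)
        (fun s => ?_) (fun s => ?_) ((hgh.symm).map r)
      · exact hr1 _ (hhr s)
      · exact hr2 _ (hgr s)
  · rintro ⟨h1, h2⟩
    exact h1.trans h2.symm
end

section
/- If f : [0,1] → S¹ is a loop with f(0) = f(1) = 1 that is not null-homotopic, then there exist a, b ∈ [0,1] with a < b such that f(a) = f(b) = 1 and f((a,b)) = S¹ \ {1}. -/
/-!
Lift `f` through the covering map `Circle.exp : ℝ → S¹` to `g : [0,1] → ℝ` with `g 0 = 0`.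
Then `g 1 ∈ 2πℤ`, and `g 1 ≠ 0`, since otherwise `g` is a loop in the simply connected space `ℝ`
and `f = exp ∘ g` is null-homotopic. So `|g|` reaches `2π`. Between the first time `b` at which
`g` reaches that value `±2π` and the last zero `a` of `g` before `b`, `g` maps `(a, b)` onto the
open interval between `0` and `±2π`, which `exp` maps onto `S¹ \ {1}`.
-/

open Set Real unitInterval

namespace Circle

lemma image_exp_Ioo_add_two_pi (r : ℝ) : exp '' Ioo r (r + 2 * π) = {exp r}ᶜ := by
  have hinj : InjOn exp (Ioc r (r + 2 * π)) := exp_injOn_Ioc (by simp)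
  rw [← Ioc_sdiff_right, hinj.image_sdiff_subset (by simp [pi_pos]),
    periodic_exp.image_Ioc two_pi_pos, exp_surjective.range_eq, image_singleton,
    exp_add_two_pi, compl_eq_univ_sdiff]

lemma image_exp_uIoo {s t : ℝ} (h : |t - s| = 2 * π) : exp '' uIoo s t = {exp s}ᶜ := by
  rcases (abs_eq two_pi_pos.le).mp h with h | h
  · rw [uIoo_of_lt (by linarith [two_pi_pos]), show t = s + 2 * π by linarith,
      image_exp_Ioo_add_two_pi]
  · rw [uIoo_of_gt (by linarith [two_pi_pos]), show s = t + 2 * π by linarith,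
      image_exp_Ioo_add_two_pi, exp_add_two_pi]

lemma two_pi_le_abs_of_exp_eq_one {r : ℝ} (h : exp r = 1) (hr : r ≠ 0) : 2 * π ≤ |r| := by
  obtain ⟨n, rfl⟩ := exp_eq_one.mp h
  have hn : (1 : ℝ) ≤ |(n : ℝ)| := by
    exact_mod_cast Int.one_le_abs (by rintro rfl; simp at hr)
  rw [abs_mul, abs_of_pos two_pi_pos]
  nlinarith [two_pi_pos]

end Circle

lemma Path.homotopic_refl_of_comp_eq {E X : Type*} [TopologicalSpace E] [SimplyConnectedSpace E]
    [TopologicalSpace X] {p : E → X} (hp : Continuous p) {x : X} (γ : Path x x) (Γ : C(I, E))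
    (hΓ : p ∘ Γ = γ) (hΓ01 : Γ 0 = Γ 1) : γ.Homotopic (Path.refl x) := by
  obtain rfl : p (Γ 0) = x := (congr_fun hΓ 0).trans γ.source
  let Γ' : Path (Γ 0) (Γ 0) := ⟨Γ, rfl, hΓ01.symm⟩
  have hγ : γ = Γ'.map hp := by ext t; exact (congr_fun hΓ t).symm
  have hrefl : (Path.refl (Γ 0)).map hp = Path.refl _ := by ext; rfl
  rw [hγ, ← hrefl]
  exact (SimplyConnectedSpace.paths_homotopic Γ' (Path.refl _)).map ⟨p, hp⟩

section FirstPassage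

variable {α δ : Type*} [ConditionallyCompleteLinearOrder α] [TopologicalSpace α] [OrderTopology α]
  [DenselyOrdered α] [LinearOrder δ] [TopologicalSpace δ] [OrderClosedTopology δ]

lemma ContinuousOn.exists_image_Ioo_eq_Ioo {g : α → δ} {x y : α} (hxy : x ≤ y)
    (hg : ContinuousOn g (Icc x y)) (hlt : g x < g y) :
    ∃ a b, x ≤ a ∧ a < b ∧ b ≤ y ∧ g a = g x ∧ g b = g y ∧ g '' Ioo a b = Ioo (g x) (g y) := by
  set S := Icc x y ∩ g ⁻¹' {g y}
  have hS : IsClosed S := hg.preimage_isClosed_of_isClosed isClosed_Icc isClosed_singleton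
  have hSb : BddBelow S := ⟨x, fun t ht => ht.1.1⟩
  obtain ⟨⟨hxb, hby⟩, hgb : g (sInf S) = g y⟩ : sInf S ∈ S :=
    hS.csInf_mem ⟨y, ⟨hxy, le_rfl⟩, rfl⟩ hSb
  set b := sInf S
  set A := Icc x b ∩ g ⁻¹' {g x}
  have hA : IsClosed A := (hg.mono (Icc_subset_Icc_right hby)).preimage_isClosed_of_isClosed
    isClosed_Icc isClosed_singleton
  have hAb : BddAbove A := ⟨b, fun t ht => ht.1.2⟩
  obtain ⟨⟨hxa, hab_le⟩, hga : g (sSup A) = g x⟩ : sSup A ∈ A :=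
    hA.csSup_mem ⟨x, ⟨le_rfl, hxb⟩, rfl⟩ hAb
  set a := sSup A
  have hab : a < b := hab_le.lt_of_ne (by rintro h; rw [h, hgb] at hga; exact hlt.ne' hga)
  have avoid_low : ∀ t ∈ Ioc a b, g t ≠ g x := fun t ht h =>
    ht.1.not_ge (le_csSup hAb ⟨⟨hxa.trans ht.1.le, ht.2⟩, h⟩)
  have avoid_high : ∀ t ∈ Ico a b, g t ≠ g y := fun t ht h =>
    ht.2.not_ge (csInf_le hSb ⟨⟨hxa.trans ht.1, ht.2.le.trans hby⟩, h⟩)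
  have hgab : ContinuousOn g (Icc a b) := hg.mono (Icc_subset_Icc hxa hby)
  refine ⟨a, b, hxa, hab, hby, hga, hgb, subset_antisymm ?_ fun v hv => ?_⟩
  · rintro _ ⟨t, ht, rfl⟩
    refine ⟨lt_of_not_ge fun hle => ?_, lt_of_not_ge fun hge => ?_⟩
    · obtain ⟨s, hs, hgs⟩ := intermediate_value_Icc ht.2.le
        (hgab.mono (Icc_subset_Icc_left ht.1.le)) ⟨hle, hgb ▸ hlt.le⟩
      exact avoid_low s ⟨ht.1.trans_le hs.1, hs.2⟩ hgs
    · obtain ⟨s, hs, hgs⟩ := intermediate_value_Icc ht.1.le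
        (hgab.mono (Icc_subset_Icc_right ht.2.le)) ⟨hga ▸ hlt.le, hge⟩
      exact avoid_high s ⟨hs.1, hs.2.trans_lt ht.2⟩ hgs
  · obtain ⟨s, hs, hgs⟩ := intermediate_value_Icc hab_le hgab ⟨hga ▸ hv.1.le, hgb ▸ hv.2.le⟩
    refine ⟨s, ⟨hs.1.lt_of_ne ?_, hs.2.lt_of_ne ?_⟩, hgs⟩
    · rintro rfl; exact hv.1.ne' (hgs.symm.trans hga)
    · rintro rfl; exact hv.2.ne (hgs.symm.trans hgb)

lemma ContinuousOn.exists_image_Ioo_eq_uIoo {g : α → δ} {x y : α} (hxy : x ≤ y)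
    (hg : ContinuousOn g (Icc x y)) (hne : g x ≠ g y) :
    ∃ a b, x ≤ a ∧ a < b ∧ b ≤ y ∧ g a = g x ∧ g b = g y ∧ g '' Ioo a b = uIoo (g x) (g y) := by
  rcases hne.lt_or_gt with hlt | hgt
  · rw [uIoo_of_lt hlt]
    exact hg.exists_image_Ioo_eq_Ioo hxy hlt
  · rw [uIoo_of_gt hgt]
    obtain ⟨a, b, hxa, hab, hby, hga, hgb, himage⟩ :=
      ContinuousOn.exists_image_Ioo_eq_Ioo (δ := δᵒᵈ) hxy hg hgt
    exact ⟨a, b, hxa, hab, hby, hga, hgb, himage.trans (ext fun _ => and_comm)⟩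

end FirstPassage

/-- If `f : [0,1] → S¹` is a loop based at `1` that is not null-homotopic, then there are
`a < b` in `[0,1]` with `f a = f b = 1` and `f((a,b)) = S¹ \ {1}`. -/
theorem stmt10 (f : Path (1 : Circle) 1)
    (hf : ¬ f.Homotopic (Path.refl 1)) :
    ∃ a b : unitInterval, a < b ∧ f a = 1 ∧ f b = 1 ∧
      (⇑f) '' Set.Ioo a b = {(1 : Circle)}ᶜ := by
  obtain ⟨g, hgf, hg0⟩ :=
    Circle.isCoveringMap_exp.exists_path_lifts f.toContinuousMap 0 (by simp)
  replace hgf : Circle.exp ∘ g = f := hgf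
  have hg1 : 2 * π ≤ |g 1| := by
    refine Circle.two_pi_le_abs_of_exp_eq_one (by simpa using congr_fun hgf 1) fun h => hf ?_
    exact Path.homotopic_refl_of_comp_eq Circle.exp.continuous f g hgf (hg0.trans h.symm)
  obtain ⟨y, -, hy⟩ : ∃ y ∈ Icc 0 1, |g y| = 2 * π :=
    intermediate_value_Icc zero_le_one (continuous_abs.comp g.continuous).continuousOn
      ⟨by simp [hg0, pi_pos.le], hg1⟩
  obtain ⟨a, b, -, hab, -, hga, hgb, himage⟩ :=
    g.continuous.continuousOn.exists_image_Ioo_eq_uIoo (nonneg' (t := y))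
      (by rw [hg0]; rintro h; simp [← h, pi_ne_zero] at hy)
  refine ⟨a, b, hab, ?_, ?_, ?_⟩
  · rw [← congr_fun hgf a, Function.comp_apply, hga, hg0, Circle.exp_zero]
  · rw [← congr_fun hgf b, Function.comp_apply, hgb]
    rcases (abs_eq two_pi_pos.le).mp hy with h | h <;> simp [h]
  · rw [← hgf, image_comp, himage, Circle.image_exp_uIoo (by rwa [hg0, sub_zero]), hg0,
      Circle.exp_zero]
end
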